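/- Let T ⊂ ℝ^d be bounded and define Ψ^loc(T) = sup_{ε>0} ε·√(h_T^loc(ε)) and Ψ(T) = sup_{ε>0} ε·√(h_T(ε)), where h_T(ε) = log M(T, εB₂) and h_T^loc(ε) = sup_{δ ≥ ε} sup_{x∈T} log M(T ∩ (x + 2δB₂), δB₂). Then Ψ^loc(T) ≤ Ψ(T) ≤ 4·Ψ^loc(T). -/

import Mathlib

/-!
Let `s` be a maximal `δ`-packing of `T` and `u ⊆ s` a maximal `2δ`-packing of `s`. The balls
`closedBall y (2δ)`, `y ∈ u`, cover `s`, and each contains at most `exp h_T^loc(δ)` points of `s`,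
so `h_T(δ) ≤ h_T(2δ) + h_T^loc(δ)`. Iterating this up to a scale beyond `diam T`, where `h_T`
vanishes, gives `h_T(ε) ≤ ∑_j h_T^loc(2^j ε)`; by subadditivity of the square root,
`ε √(h_T(ε)) ≤ ∑_j 2^{-j} Ψ^loc(T) ≤ 2 Ψ^loc(T)`. The other inequality is `h_T^loc ≤ h_T`.
-/

open MeasureTheory Metric Set
open scoped ENNReal NNReal

noncomputable section

/-- `packNum A B` is the `B`-packing number of `A`: the largest cardinality of a finite
subset `A₀ ⊆ A` such that `x − y ∉ B` for all distinct `x, y ∈ A₀`. -/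
def packNum {E : Type*} [Sub E] (A B : Set E) : ℕ :=
  sSup {n : ℕ | ∃ s : Finset E, ↑s ⊆ A ∧
    (∀ x ∈ s, ∀ y ∈ s, x ≠ y → x - y ∉ B) ∧ s.card = n}

/-- Global packing entropy `h_T(ε) = log M(T, εB₂)`. -/
def entGlob {d : ℕ} (T : Set (EuclideanSpace ℝ (Fin d))) (ε : ℝ) : ℝ :=
  Real.log (packNum T (closedBall 0 ε))

/-- Local packing entropy
`h_T^loc(ε) = sup_{δ ≥ ε} sup_{x ∈ T} log M(T ∩ (x + 2δB₂), δB₂)`. -/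
def entLoc {d : ℕ} (T : Set (EuclideanSpace ℝ (Fin d))) (ε : ℝ) : ℝ :=
  ⨆ δ : {δ : ℝ // ε ≤ δ}, ⨆ x : T,
    Real.log (packNum (T ∩ closedBall (x : EuclideanSpace ℝ (Fin d)) (2 * δ.1))
      (closedBall 0 δ.1))

lemma Bornology.IsBounded.totallyBounded {X : Type*} [PseudoMetricSpace X] [ProperSpace X]
    {t : Set X} (ht : Bornology.IsBounded t) : TotallyBounded t :=
  ht.isCompact_closure.totallyBounded.subset subset_closure

lemma Metric.packingNumber_ne_top {X : Type*} [PseudoEMetricSpace X] {t : Set X} {r : ℝ≥0}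
    (ht : TotallyBounded t) (hr : r ≠ 0) : packingNumber r t ≠ ⊤ := by
  obtain ⟨N, -, hN_finite, hN⟩ := exists_finite_isCover_of_totallyBounded (ε := r / 2)
    (by positivity) ht
  have h := packingNumber_two_mul_le_externalCoveringNumber (r / 2) t
  rw [mul_div_cancel₀ r two_ne_zero] at h
  exact (h.trans hN.externalCoveringNumber_le_encard).trans_lt hN_finite.encard_lt_top |>.ne

section Packing

variable {E : Type*} [SeminormedAddCommGroup E] {A A' : Set E} {s : Finset E} {δ ε : ℝ}

lemma sub_notMem_closedBall_zero_iff {x y : E} : x - y ∉ closedBall (0 : E) δ ↔ δ < dist x y := by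
  rw [mem_closedBall_zero_iff, ← dist_eq_norm, not_le]

lemma forall_sub_notMem_closedBall_iff_isSeparated (hδ : 0 ≤ δ) :
    (∀ x ∈ s, ∀ y ∈ s, x ≠ y → x - y ∉ closedBall (0 : E) δ) ↔
      IsSeparated (ENNReal.ofReal δ) (s : Set E) := by
  simp only [IsSeparated, Set.Pairwise, Finset.mem_coe, sub_notMem_closedBall_zero_iff, edist_dist,
    ENNReal.ofReal_lt_ofReal_iff_of_nonneg hδ]

lemma bddAbove_packNum_closedBall_set (hA : TotallyBounded A) (hδ : 0 < δ) :
    BddAbove {n : ℕ | ∃ s : Finset E, ↑s ⊆ A ∧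
      (∀ x ∈ s, ∀ y ∈ s, x ≠ y → x - y ∉ closedBall 0 δ) ∧ s.card = n} := by
  refine ⟨(packingNumber δ.toNNReal A).toNat, ?_⟩
  rintro _ ⟨s, hsA, hs, rfl⟩
  have h := ((forall_sub_notMem_closedBall_iff_isSeparated hδ.le).mp hs).encard_le_packingNumber hsA
  rw [Set.encard_coe_eq_coe_finsetCard] at h
  simpa using ENat.toNat_le_toNat h (packingNumber_ne_top hA (by simpa using hδ))

lemma card_le_packNum (hA : TotallyBounded A) (hδ : 0 < δ) (hsA : ↑s ⊆ A)
    (hs : IsSeparated (ENNReal.ofReal δ) (s : Set E)) : s.card ≤ packNum A (closedBall 0 δ) :=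
  le_csSup (bddAbove_packNum_closedBall_set hA hδ)
    ⟨s, hsA, (forall_sub_notMem_closedBall_iff_isSeparated hδ.le).mpr hs, rfl⟩

lemma exists_card_eq_packNum (hA : TotallyBounded A) (hδ : 0 < δ) :
    ∃ s : Finset E, ↑s ⊆ A ∧ IsSeparated (ENNReal.ofReal δ) (s : Set E) ∧
      s.card = packNum A (closedBall 0 δ) := by
  obtain ⟨s, hsA, hs, hcard⟩ : packNum A (closedBall 0 δ) ∈ _ :=
    Nat.sSup_mem ⟨0, ∅, by simp, by simp, rfl⟩ (bddAbove_packNum_closedBall_set hA hδ)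
  exact ⟨s, hsA, (forall_sub_notMem_closedBall_iff_isSeparated hδ.le).mp hs, hcard⟩

@[simp]
lemma packNum_empty (B : Set E) : packNum ∅ B = 0 := by
  simp [packNum]

lemma packNum_anti (hA' : TotallyBounded A') (hAA' : A ⊆ A') (hε : 0 < ε) (hεδ : ε ≤ δ) :
    packNum A (closedBall 0 δ) ≤ packNum A' (closedBall 0 ε) := by
  obtain ⟨s, hsA, hs, hcard⟩ := exists_card_eq_packNum (hA'.subset hAA') (hε.trans_le hεδ)
  exact hcard ▸ card_le_packNum hA' hε (hsA.trans hAA') (hs.anti (ENNReal.ofReal_le_ofReal hεδ))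

lemma packNum_le_one_of_diam_le (hA : TotallyBounded A) (hδ : 0 < δ) (h : diam A ≤ δ) :
    packNum A (closedBall 0 δ) ≤ 1 := by
  obtain ⟨s, hsA, hs, hcard⟩ := exists_card_eq_packNum hA hδ
  rw [← hcard, Finset.card_le_one]
  intro x hx y hy
  by_contra hxy
  have hlt : ENNReal.ofReal δ < edist x y := hs (Finset.mem_coe.mpr hx) (Finset.mem_coe.mpr hy) hxy
  rw [edist_dist, ENNReal.ofReal_lt_ofReal_iff_of_nonneg hδ.le] at hlt
  exact (dist_le_diam_of_mem hA.isBounded (hsA hx) (hsA hy)).trans h |>.not_gt hlt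

lemma Finset.exists_subset_isSeparated_forall_dist_le (s : Finset E) {r : ℝ} (hr : 0 ≤ r) :
    ∃ u ⊆ s, IsSeparated (ENNReal.ofReal r) (u : Set E) ∧ ∀ z ∈ s, ∃ y ∈ u, dist z y ≤ r := by
  set C := maximalSeparatedSet r.toNNReal (s : Set E)
  have hC : C.Finite := s.finite_toSet.subset maximalSeparatedSet_subset
  have htop : packingNumber r.toNNReal (s : Set E) ≠ ⊤ :=
    ((packingNumber_le_encard_self _).trans_lt s.finite_toSet.encard_lt_top).ne
  refine ⟨hC.toFinset, by simpa [C] using maximalSeparatedSet_subset,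
    by rw [hC.coe_toFinset]; exact isSeparated_maximalSeparatedSet, fun z hz => ?_⟩
  obtain ⟨y, hy, hzy⟩ := isCover_maximalSeparatedSet htop (Finset.mem_coe.mpr hz)
  exact ⟨y, hC.mem_toFinset.mpr hy, (edist_le_ofReal hr).mp hzy⟩

lemma exists_packNum_le_mul_packNum_inter_closedBall (hA : TotallyBounded A) (hA_ne : A.Nonempty)
    (hδ : 0 < δ) : ∃ y ∈ A, packNum A (closedBall 0 δ) ≤
      packNum A (closedBall 0 (2 * δ)) * packNum (A ∩ closedBall y (2 * δ)) (closedBall 0 δ) := by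
  classical
  obtain ⟨s, hsA, hs, hcard⟩ := exists_card_eq_packNum hA hδ
  obtain ⟨u, hus, hu, hcover⟩ :=
    s.exists_subset_isSeparated_forall_dist_le (by positivity : 0 ≤ 2 * δ)
  choose! c hcu hc using hcover
  rcases s.eq_empty_or_nonempty with rfl | ⟨z, hz⟩
  · obtain ⟨y, hy⟩ := hA_ne
    exact ⟨y, hy, by simp [← hcard]⟩
  set m := fun y => packNum (A ∩ closedBall y (2 * δ)) (closedBall 0 δ)
  obtain ⟨y, hyu, hy_max⟩ := u.exists_max_image m ⟨c z, hcu z hz⟩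
  refine ⟨y, hsA (hus hyu), ?_⟩
  rw [← hcard, Finset.card_eq_sum_card_fiberwise (f := c) (t := u) hcu]
  calc ∑ y' ∈ u, {x ∈ s | c x = y'}.card ≤ ∑ y' ∈ u, m y' := by
        refine Finset.sum_le_sum fun y' _ => card_le_packNum (hA.subset inter_subset_left) hδ ?_
          (hs.subset (Finset.coe_subset.mpr (Finset.filter_subset _ s)))
        intro x hx
        obtain ⟨hxs, rfl⟩ := Finset.mem_filter.mp hx
        exact ⟨hsA hxs, hc x hxs⟩
    _ ≤ u.card * m y := by simpa using Finset.sum_le_card_nsmul u m (m y) hy_max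
    _ ≤ _ := Nat.mul_le_mul_right _
        (card_le_packNum hA (by positivity) ((Finset.coe_subset.mpr hus).trans hsA) hu)

end Packing

lemma Real.sqrt_sum_le_sum_sqrt {ι : Type*} (s : Finset ι) {f : ι → ℝ} (hf : ∀ i ∈ s, 0 ≤ f i) :
    √(∑ i ∈ s, f i) ≤ ∑ i ∈ s, √(f i) := by
  refine (Real.sqrt_le_left (Finset.sum_nonneg fun i _ => Real.sqrt_nonneg _)).mpr ?_
  calc ∑ i ∈ s, f i = ∑ i ∈ s, √(f i) ^ 2 :=
        Finset.sum_congr rfl fun i hi => (Real.sq_sqrt (hf i hi)).symm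
    _ ≤ (∑ i ∈ s, √(f i)) ^ 2 :=
        Finset.sum_sq_le_sq_sum_of_nonneg fun i _ => Real.sqrt_nonneg _

lemma Real.log_natCast_le_log_natCast {m n : ℕ} (h : m ≤ n) : Real.log m ≤ Real.log n := by
  rcases Nat.eq_zero_or_pos m with rfl | hm
  · simpa using Real.log_natCast_nonneg n
  exact Real.log_le_log (by positivity) (by exact_mod_cast h)

lemma Real.log_le_log_add_log_of_le_mul {n a b : ℕ} (h : n ≤ a * b) :
    Real.log n ≤ Real.log a + Real.log b := by
  rcases Nat.eq_zero_or_pos n with rfl | hn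
  · simpa using add_nonneg (Real.log_natCast_nonneg a) (Real.log_natCast_nonneg b)
  have hab : 0 < a * b := hn.trans_le h
  have ha : (a : ℝ) ≠ 0 := by exact_mod_cast (Nat.pos_of_mul_pos_right hab).ne'
  have hb : (b : ℝ) ≠ 0 := by exact_mod_cast (Nat.pos_of_mul_pos_left hab).ne'
  rw [← Real.log_mul ha hb]
  exact_mod_cast Real.log_natCast_le_log_natCast h

/-- Real suprema of unbounded families are `0`, so both inequalities have to be proved at once:
if one family is unbounded, so is the other. -/
lemma iSup_le_iSup_and_iSup_le_mul_iSup {ι : Type*} {f g : ι → ℝ} {c : ℝ} (hc : 0 ≤ c)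
    (hf : ∀ i, 0 ≤ f i) (hfg : ∀ i, f i ≤ g i) (hgf : ∀ B, (∀ i, f i ≤ B) → ∀ i, g i ≤ c * B) :
    (⨆ i, f i) ≤ ⨆ i, g i ∧ (⨆ i, g i) ≤ c * ⨆ i, f i := by
  by_cases hf_bdd : BddAbove (range f)
  · have hg_le : ∀ i, g i ≤ c * ⨆ i, f i := hgf _ fun i => le_ciSup hf_bdd i
    have hg_bdd : BddAbove (range g) := ⟨_, forall_mem_range.mpr hg_le⟩
    have hg : ∀ i, 0 ≤ g i := fun i => (hf i).trans (hfg i)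
    exact ⟨Real.iSup_le (fun i => (hfg i).trans (le_ciSup hg_bdd i)) (Real.iSup_nonneg hg),
      Real.iSup_le hg_le (mul_nonneg hc (Real.iSup_nonneg hf))⟩
  · have hg_bdd : ¬BddAbove (range g) := fun ⟨B, hB⟩ =>
      hf_bdd ⟨B, forall_mem_range.mpr fun i => (hfg i).trans (hB (mem_range_self i))⟩
    simp [Real.iSup_of_not_bddAbove hf_bdd, Real.iSup_of_not_bddAbove hg_bdd]

section Entropy

variable {d : ℕ} {T : Set (EuclideanSpace ℝ (Fin d))} {ε δ : ℝ}

lemma entGlob_nonneg (T : Set (EuclideanSpace ℝ (Fin d))) (ε : ℝ) : 0 ≤ entGlob T ε :=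
  Real.log_natCast_nonneg _

lemma entLoc_nonneg (T : Set (EuclideanSpace ℝ (Fin d))) (ε : ℝ) : 0 ≤ entLoc T ε :=
  Real.iSup_nonneg fun _ => Real.iSup_nonneg fun _ => Real.log_natCast_nonneg _

lemma log_packNum_inter_closedBall_le_entGlob (hT : Bornology.IsBounded T) (hε : 0 < ε)
    (hεδ : ε ≤ δ) (x : EuclideanSpace ℝ (Fin d)) :
    Real.log (packNum (T ∩ closedBall x (2 * δ)) (closedBall 0 δ)) ≤ entGlob T ε :=
  Real.log_natCast_le_log_natCast (packNum_anti hT.totallyBounded inter_subset_left hε hεδ)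

lemma entLoc_le_entGlob (hT : Bornology.IsBounded T) (hε : 0 < ε) : entLoc T ε ≤ entGlob T ε :=
  Real.iSup_le (fun δ => Real.iSup_le
    (fun x => log_packNum_inter_closedBall_le_entGlob hT hε δ.2 x) (entGlob_nonneg T ε))
    (entGlob_nonneg T ε)

lemma log_packNum_inter_closedBall_le_entLoc (hT : Bornology.IsBounded T) (hε : 0 < ε)
    {x : EuclideanSpace ℝ (Fin d)} (hx : x ∈ T) :
    Real.log (packNum (T ∩ closedBall x (2 * ε)) (closedBall 0 ε)) ≤ entLoc T ε := by
  have hbdd_inner : ∀ δ : {δ : ℝ // ε ≤ δ}, BddAbove (range fun x : T =>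
      Real.log (packNum (T ∩ closedBall (x : EuclideanSpace ℝ (Fin d)) (2 * δ.1))
        (closedBall 0 δ.1))) := fun δ =>
    ⟨entGlob T ε, forall_mem_range.mpr fun x => log_packNum_inter_closedBall_le_entGlob hT hε δ.2 x⟩
  have hbdd_outer : BddAbove (range fun δ : {δ : ℝ // ε ≤ δ} => ⨆ x : T,
      Real.log (packNum (T ∩ closedBall (x : EuclideanSpace ℝ (Fin d)) (2 * δ.1))
        (closedBall 0 δ.1))) :=
    ⟨entGlob T ε, forall_mem_range.mpr fun δ => Real.iSup_le
      (fun x => log_packNum_inter_closedBall_le_entGlob hT hε δ.2 x) (entGlob_nonneg T ε)⟩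
  exact (le_ciSup (hbdd_inner ⟨ε, le_rfl⟩) ⟨x, hx⟩).trans (le_ciSup hbdd_outer ⟨ε, le_rfl⟩)

lemma entGlob_le_entGlob_two_mul_add_entLoc (hT : Bornology.IsBounded T) (hδ : 0 < δ) :
    entGlob T δ ≤ entGlob T (2 * δ) + entLoc T δ := by
  rcases T.eq_empty_or_nonempty with rfl | hT_ne
  · simpa [entGlob] using entLoc_nonneg ∅ δ
  obtain ⟨y, hyT, hy⟩ := exists_packNum_le_mul_packNum_inter_closedBall hT.totallyBounded hT_ne hδ
  exact (Real.log_le_log_add_log_of_le_mul hy).trans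
    (add_le_add le_rfl (log_packNum_inter_closedBall_le_entLoc hT hδ hyT))

lemma entGlob_le_add_sum_entLoc (hT : Bornology.IsBounded T) (hε : 0 < ε) (k : ℕ) :
    entGlob T ε ≤ entGlob T (2 ^ k * ε) + ∑ j ∈ Finset.range k, entLoc T (2 ^ j * ε) := by
  induction k with
  | zero => simp
  | succ k ih =>
    have hstep := entGlob_le_entGlob_two_mul_add_entLoc hT (by positivity : 0 < 2 ^ k * ε)
    rw [← mul_assoc, ← pow_succ'] at hstep
    rw [Finset.sum_range_succ]
    linarith

lemma entGlob_eq_zero_of_diam_le (hT : Bornology.IsBounded T) (hδ : 0 < δ) (h : diam T ≤ δ) :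
    entGlob T δ = 0 := by
  rcases Nat.le_one_iff_eq_zero_or_eq_one.mp (packNum_le_one_of_diam_le hT.totallyBounded hδ h)
    with h0 | h1 <;> simp [entGlob, *]

lemma exists_entGlob_le_sum_entLoc (hT : Bornology.IsBounded T) (hε : 0 < ε) :
    ∃ k : ℕ, entGlob T ε ≤ ∑ j ∈ Finset.range k, entLoc T (2 ^ j * ε) := by
  obtain ⟨k, hk⟩ := pow_unbounded_of_one_lt (diam T / ε) one_lt_two
  refine ⟨k, ?_⟩
  have hdiam : diam T ≤ 2 ^ k * ε := ((div_lt_iff₀ hε).mp hk).le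
  simpa [entGlob_eq_zero_of_diam_le hT (by positivity) hdiam] using
    entGlob_le_add_sum_entLoc hT hε k

lemma mul_sqrt_entGlob_le (hT : Bornology.IsBounded T) {B : ℝ}
    (hB : ∀ δ, 0 < δ → δ * √(entLoc T δ) ≤ B) (hε : 0 < ε) : ε * √(entGlob T ε) ≤ 2 * B := by
  obtain ⟨k, hk⟩ := exists_entGlob_le_sum_entLoc hT hε
  have hterm : ∀ j : ℕ, ε * √(entLoc T (2 ^ j * ε)) ≤ B * (1 / 2) ^ j := fun j => by
    have h := hB _ (by positivity : 0 < 2 ^ j * ε)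
    rw [one_div, inv_pow, ← div_eq_mul_inv, le_div_iff₀ (by positivity)]
    linarith
  have hB0 : 0 ≤ B := (mul_nonneg zero_le_one (Real.sqrt_nonneg _)).trans (hB 1 one_pos)
  calc ε * √(entGlob T ε) ≤ ε * ∑ j ∈ Finset.range k, √(entLoc T (2 ^ j * ε)) :=
        mul_le_mul_of_nonneg_left ((Real.sqrt_le_sqrt hk).trans
          (Real.sqrt_sum_le_sum_sqrt _ fun j _ => entLoc_nonneg T _)) hε.le
    _ ≤ ∑ j ∈ Finset.range k, B * (1 / 2) ^ j := by
        rw [Finset.mul_sum]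
        exact Finset.sum_le_sum fun j _ => hterm j
    _ ≤ 2 * B := by
        rw [← Finset.mul_sum, mul_comm]
        exact mul_le_mul_of_nonneg_right (sum_geometric_two_le k) hB0

end Entropy

/-- For bounded `T ⊆ ℝ^d`, with `Ψ^loc(T) = sup_{ε>0} ε√(h_T^loc(ε))`
and `Ψ(T) = sup_{ε>0} ε√(h_T(ε))`, one has `Ψ^loc(T) ≤ Ψ(T) ≤ 4Ψ^loc(T)`. -/
theorem statement9 {d : ℕ} (T : Set (EuclideanSpace ℝ (Fin d)))
    (hbd : Bornology.IsBounded T) :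
    (⨆ ε : {ε : ℝ // 0 < ε}, ε.1 * Real.sqrt (entLoc T ε.1)) ≤
      (⨆ ε : {ε : ℝ // 0 < ε}, ε.1 * Real.sqrt (entGlob T ε.1)) ∧
    (⨆ ε : {ε : ℝ // 0 < ε}, ε.1 * Real.sqrt (entGlob T ε.1)) ≤
      4 * ⨆ ε : {ε : ℝ // 0 < ε}, ε.1 * Real.sqrt (entLoc T ε.1) := by
  refine iSup_le_iSup_and_iSup_le_mul_iSup (by norm_num)
    (fun ε => mul_nonneg ε.2.le (Real.sqrt_nonneg _))
    (fun ε => mul_le_mul_of_nonneg_left (Real.sqrt_le_sqrt (entLoc_le_entGlob hbd ε.2)) ε.2.le) ?_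
  intro B hB ε
  have hB0 : 0 ≤ B := (mul_nonneg zero_le_one (Real.sqrt_nonneg _)).trans (hB ⟨1, one_pos⟩)
  calc ε.1 * √(entGlob T ε.1) ≤ 2 * B := mul_sqrt_entGlob_le hbd (fun δ hδ => hB ⟨δ, hδ⟩) ε.2
    _ ≤ 4 * B := by linarith
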